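/- arXiv:2411.19864 — 2 statements merged into one kernel-verified Lean document; each statement's English description precedes it below -/
import Mathlib

section
/- The Lebesgue area (two-dimensional volume) of the region {(x, y) ∈ ℝ² : x⁴ + y⁴ ≤ 1} equals 2√2 · ∫₀¹ 1/√(1 − r⁴) dr. -/
/-!
Both sides equal `Γ(1/4)² / (2√π)`. For the area this is the Dirichlet formula for the volume
of an `ℓ^p` unit ball. The substitution `x = r⁴` turns the integral into `B(1/4, 1/2) / 4`,
and the reflection formula `Γ(1/4) Γ(3/4) = π / sin(π/4)` removes `Γ(3/4)`.
-/

open MeasureTheory Set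

theorem volume_abs_rpow_add_abs_rpow_le_one {p : ℝ} (hp : 1 ≤ p) :
    volume {q : ℝ × ℝ | |q.1| ^ p + |q.2| ^ p ≤ 1} =
      ENNReal.ofReal ((2 * Real.Gamma (1 / p + 1)) ^ 2 / Real.Gamma (2 / p + 1)) := by
  have hball := volume_sum_rpow_le (Fin 2) hp 1
  rw [ENNReal.ofReal_one, one_pow, one_mul, Fintype.card_fin, Nat.cast_ofNat] at hball
  rw [← hball, ← (volume_preserving_finTwoArrow ℝ).measure_preimage_equiv]
  congr 1
  ext x
  simp only [mem_preimage, MeasurableEquiv.finTwoArrow_apply, Fin.sum_univ_two, mem_ofPred_eq,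
    one_div]
  rw [← Real.one_rpow p⁻¹, Real.rpow_le_rpow_iff (by positivity) zero_le_one (by positivity),
    Real.one_rpow]

theorem integral_rpow_mul_one_sub_rpow {a b : ℝ} (ha : 0 < a) (hb : 0 < b) :
    ∫ x in (0:ℝ)..1, x ^ (a - 1) * (1 - x) ^ (b - 1) =
      Real.Gamma a * Real.Gamma b / Real.Gamma (a + b) := by
  apply Complex.ofReal_injective
  rw [← intervalIntegral.integral_ofReal]
  push_cast
  rw [← Complex.Gamma_ofReal, ← Complex.Gamma_ofReal, ← Complex.Gamma_ofReal, Complex.ofReal_add,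
    ← Complex.betaIntegral_eq_Gamma_mul_div _ _ (by simpa) (by simpa), Complex.betaIntegral]
  refine intervalIntegral.integral_congr fun x hx => ?_
  rw [uIcc_of_le zero_le_one] at hx
  rw [Complex.ofReal_cpow hx.1, Complex.ofReal_cpow (by linarith [hx.2])]
  push_cast; ring

theorem mul_integral_one_sub_rpow_rpow {p : ℝ} (hp : 0 < p) (s : ℝ) :
    p * ∫ r in (0:ℝ)..1, (1 - r ^ p) ^ (s - 1) =
      ∫ x in (0:ℝ)..1, x ^ (p⁻¹ - 1) * (1 - x) ^ (s - 1) := by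
  have hmono : StrictMonoOn (fun r : ℝ => r ^ p) (Ioo 0 1) := fun a ha b _ hab =>
    Real.rpow_lt_rpow ha.1.le hab hp
  have himage : (fun r : ℝ => r ^ p) '' Ioo 0 1 = Ioo 0 1 := by
    refine Subset.antisymm ?_ fun y hy => ⟨y ^ p⁻¹, ?_, Real.rpow_inv_rpow hy.1.le hp.ne'⟩
    · rintro _ ⟨r, hr, rfl⟩
      exact ⟨Real.rpow_pos_of_pos hr.1 p, Real.rpow_lt_one hr.1.le hr.2 hp⟩
    · exact ⟨Real.rpow_pos_of_pos hy.1 _, Real.rpow_lt_one hy.1.le hy.2 (inv_pos.2 hp)⟩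
  have hderiv : ∀ r ∈ Ioo (0:ℝ) 1,
      HasDerivWithinAt (fun r : ℝ => r ^ p) (p * r ^ (p - 1)) (Ioo 0 1) r :=
    fun r hr => (Real.hasDerivAt_rpow_const (Or.inl hr.1.ne')).hasDerivWithinAt
  rw [intervalIntegral.integral_of_le zero_le_one, intervalIntegral.integral_of_le zero_le_one,
    integral_Ioc_eq_integral_Ioo, integral_Ioc_eq_integral_Ioo]
  conv_rhs => rw [← himage, integral_image_eq_integral_abs_deriv_smul measurableSet_Ioo hderiv
    hmono.injOn]
  rw [← integral_const_mul]
  refine setIntegral_congr_fun measurableSet_Ioo fun r hr => ?_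
  have hr0 := hr.1
  simp only [smul_eq_mul]
  rw [abs_of_pos (by positivity), ← Real.rpow_mul hr0.le, mul_sub, mul_inv_cancel₀ hp.ne', mul_one,
    mul_assoc p, ← mul_assoc (r ^ _), ← Real.rpow_add hr0]
  simp

theorem integral_one_sub_rpow_rpow {p s : ℝ} (hp : 0 < p) (hs : 0 < s) :
    ∫ r in (0:ℝ)..1, (1 - r ^ p) ^ (s - 1) =
      Real.Gamma p⁻¹ * Real.Gamma s / (p * Real.Gamma (p⁻¹ + s)) := by
  have hG := Real.Gamma_pos_of_pos (add_pos (inv_pos.2 hp) hs)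
  have h := mul_integral_one_sub_rpow_rpow hp s
  rw [integral_rpow_mul_one_sub_rpow (inv_pos.2 hp) hs] at h
  rw [eq_div_iff (mul_ne_zero hp.ne' hG.ne'), ← mul_assoc, mul_comm _ p, h,
    div_mul_cancel₀ _ hG.ne']

theorem Gamma_one_fourth_mul_Gamma_three_fourths :
    Real.Gamma (1 / 4) * Real.Gamma (3 / 4) = √2 * Real.pi := by
  have h := Real.Gamma_mul_Gamma_one_sub (1 / 4)
  rw [show (1 : ℝ) - 1 / 4 = 3 / 4 by norm_num, show Real.pi * (1 / 4) = Real.pi / 4 by ring,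
    Real.sin_pi_div_four] at h
  rw [h]
  field_simp
  rw [Real.sq_sqrt zero_le_two]

theorem volume_squircle :
    volume {q : ℝ × ℝ | q.1 ^ 4 + q.2 ^ 4 ≤ 1} =
      ENNReal.ofReal (Real.Gamma (1 / 4) ^ 2 / (2 * √Real.pi)) := by
  have habs (x : ℝ) : |x| ^ (4 : ℝ) = x ^ 4 := by
    rw [show (4 : ℝ) = (4 : ℕ) by norm_num, Real.rpow_natCast, pow_abs,
      abs_of_nonneg (by positivity)]
  have h := volume_abs_rpow_add_abs_rpow_le_one (p := 4) (by norm_num)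
  simp only [habs] at h
  rw [h, show (2 : ℝ) / 4 + 1 = 1 / 2 + 1 by norm_num, Real.Gamma_add_one (by norm_num),
    Real.Gamma_add_one (by norm_num), Real.Gamma_one_half_eq]
  congr 1
  field_simp
  ring

theorem integral_one_div_sqrt_one_sub_pow_four :
    ∫ r in (0:ℝ)..1, 1 / √(1 - r ^ 4) = Real.Gamma (1 / 4) ^ 2 / (4 * √(2 * Real.pi)) := by
  have hcongr : ∫ r in (0:ℝ)..1, 1 / √(1 - r ^ 4) =
      ∫ r in (0:ℝ)..1, (1 - r ^ (4:ℝ)) ^ ((1 / 2 : ℝ) - 1) := by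
    refine intervalIntegral.integral_congr fun r hr => ?_
    rw [uIcc_of_le zero_le_one] at hr
    have hnonneg : 0 ≤ 1 - r ^ 4 := sub_nonneg.2 (pow_le_one₀ hr.1 hr.2)
    rw [show (1 / 2 : ℝ) - 1 = -(1 / 2) by norm_num, Real.rpow_neg (by exact_mod_cast hnonneg),
      Real.sqrt_eq_rpow, one_div]
    norm_cast
  have hG := Gamma_one_fourth_mul_Gamma_three_fourths
  rw [hcongr, integral_one_sub_rpow_rpow (by norm_num) (by norm_num),
    show (4 : ℝ)⁻¹ + 1 / 2 = 3 / 4 by norm_num, Real.Gamma_one_half_eq, Real.sqrt_mul zero_le_two]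
  field_simp
  rw [hG, Real.sq_sqrt Real.pi_pos.le, mul_comm]

theorem squircle_area_eq_two_sqrt_two_mul_lemniscate_integral :
    volume {p : ℝ × ℝ | p.1 ^ 4 + p.2 ^ 4 ≤ 1} =
      ENNReal.ofReal (2 * Real.sqrt 2 * ∫ r in (0:ℝ)..1, 1 / Real.sqrt (1 - r ^ 4)) := by
  rw [volume_squircle, integral_one_div_sqrt_one_sub_pow_four, Real.sqrt_mul zero_le_two]
  congr 1
  field_simp
  ring
end

section
/- For every R ∈ [0, 1], setting T = √((1 − R²)/(1 + R²)), one has ∫₀^{√((1−R⁴)/(1+R⁴))} 1/√(1 − r⁴) dr = √2 · ∫₀^T 1/√(1 + v⁴) dv. -/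
/-!
The substitution `r = √2 t / √(1 + t⁴)` is monotone on `[-1, 1]`, and there
`1 - r⁴ = ((1 - t⁴) / (1 + t⁴))²` and `dr/dt = √2 (1 - t⁴) / (1 + t⁴)^{3/2}`,
so `dr / √(1 - r⁴) = √2 dt / √(1 + t⁴)`.
For `T² = (1 - R²) / (1 + R²)` the new endpoint is `r² = 2T² / (1 + T⁴) = (1 - R⁴) / (1 + R⁴)`.
-/

open Set MeasureTheory intervalIntegral

noncomputable def lemniscateSubst (t : ℝ) : ℝ := √2 * t / √(1 + t ^ 4)

@[simp]
lemma lemniscateSubst_zero : lemniscateSubst 0 = 0 := by simp [lemniscateSubst]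

lemma hasDerivAt_lemniscateSubst (t : ℝ) :
    HasDerivAt lemniscateSubst (√2 * (1 - t ^ 4) / ((1 + t ^ 4) * √(1 + t ^ 4))) t := by
  have hden : HasDerivAt (fun t : ℝ => √(1 + t ^ 4)) (4 * t ^ 3 / (2 * √(1 + t ^ 4))) t := by
    simpa using ((hasDerivAt_pow 4 t).const_add 1).sqrt (by positivity)
  have hnum : HasDerivAt (fun t : ℝ => √2 * t) (√2) t := by
    simpa using (hasDerivAt_id t).const_mul √2
  have hden_ne : √(1 + t ^ 4) ≠ 0 := by positivity
  refine (hnum.div hden hden_ne).congr_deriv ?_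
  have hsq : √(1 + t ^ 4) ^ 2 = 1 + t ^ 4 := Real.sq_sqrt (by positivity)
  field_simp
  linear_combination (4 * t ^ 4) * hsq

lemma lemniscateSubst_sq (t : ℝ) : lemniscateSubst t ^ 2 = 2 * t ^ 2 / (1 + t ^ 4) := by
  rw [lemniscateSubst, div_pow, mul_pow, Real.sq_sqrt zero_le_two, Real.sq_sqrt (by positivity)]

lemma one_sub_lemniscateSubst_pow_four (t : ℝ) :
    1 - lemniscateSubst t ^ 4 = ((1 - t ^ 4) / (1 + t ^ 4)) ^ 2 := by
  have : (0 : ℝ) < 1 + t ^ 4 := by positivity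
  rw [show lemniscateSubst t ^ 4 = (lemniscateSubst t ^ 2) ^ 2 by ring, lemniscateSubst_sq]
  field_simp
  ring

lemma lemniscateSubst_sqrt (x : ℝ) : lemniscateSubst √x = √(2 * x / (1 + x ^ 2)) := by
  rcases le_or_gt 0 x with hx | hx
  · rw [lemniscateSubst, Real.sqrt_div (by positivity), Real.sqrt_mul zero_le_two,
      show √x ^ 4 = (√x ^ 2) ^ 2 by ring, Real.sq_sqrt hx]
  · rw [Real.sqrt_eq_zero'.2 hx.le, lemniscateSubst_zero,
      Real.sqrt_eq_zero'.2 (div_nonpos_of_nonpos_of_nonneg (by linarith) (by positivity))]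

lemma lemniscateSubst_deriv_mul_one_div_sqrt {t : ℝ} (ht : t ^ 4 < 1) :
    √2 * (1 - t ^ 4) / ((1 + t ^ 4) * √(1 + t ^ 4)) * (1 / √(1 - lemniscateSubst t ^ 4)) =
      √2 * (1 / √(1 + t ^ 4)) := by
  have hpos : 0 < 1 - t ^ 4 := by linarith
  have hden_ne : √(1 + t ^ 4) ≠ 0 := by positivity
  rw [one_sub_lemniscateSubst_pow_four, Real.sqrt_sq (by positivity)]
  field_simp

theorem integral_one_div_sqrt_one_sub_pow_four_to_lemniscateSubst {T : ℝ} (hT : |T| ≤ 1) :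
    ∫ r in (0 : ℝ)..lemniscateSubst T, 1 / √(1 - r ^ 4) =
      √2 * ∫ v in (0 : ℝ)..T, 1 / √(1 + v ^ 4) := by
  obtain ⟨hT₁, hT₂⟩ := abs_le.1 hT
  have hderiv_nonneg : ∀ t ∈ Ioo (min 0 T) (max 0 T),
      0 ≤ √2 * (1 - t ^ 4) / ((1 + t ^ 4) * √(1 + t ^ 4)) := by
    intro t ⟨ht₁, ht₂⟩
    have ht : |t| ≤ 1 := abs_le.2 ⟨by grind, by grind⟩
    have : t ^ 4 ≤ 1 := by
      rwa [← Even.pow_abs ⟨2, rfl⟩, pow_le_one_iff_of_nonneg (abs_nonneg t) four_ne_zero]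
    exact div_nonneg (mul_nonneg (Real.sqrt_nonneg 2) (by linarith)) (by positivity)
  have hsubst := integral_deriv_smul_comp_of_deriv_nonneg (g := fun r => 1 / √(1 - r ^ 4))
    (HasDerivAt.continuousOn fun t _ => hasDerivAt_lemniscateSubst t)
    (fun t _ => hasDerivAt_lemniscateSubst t) hderiv_nonneg
  rw [lemniscateSubst_zero] at hsubst
  rw [← hsubst, ← intervalIntegral.integral_const_mul]
  refine integral_congr_ae ?_
  -- the integrands can differ only at `t = T = ±1`, where `1 / √(1 - r⁴)` takes the junk value `0`
  filter_upwards [volume.ae_ne T] with t htT ht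
  have ht : |t| < 1 := abs_lt.2 (by rw [mem_uIoc] at ht; constructor <;> grind)
  refine lemniscateSubst_deriv_mul_one_div_sqrt ?_
  rwa [← Even.pow_abs ⟨2, rfl⟩, pow_lt_one_iff_of_nonneg (abs_nonneg t) four_ne_zero]

theorem lemniscate_arc_to_D_eq_sqrt_two_mul_squircle_sector_general
    (R : ℝ)
    (T : ℝ) (hT : T = Real.sqrt ((1 - R ^ 2) / (1 + R ^ 2))) :
    ∫ r in (0:ℝ)..Real.sqrt ((1 - R ^ 4) / (1 + R ^ 4)), 1 / Real.sqrt (1 - r ^ 4) =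
      Real.sqrt 2 * ∫ v in (0:ℝ)..T, 1 / Real.sqrt (1 + v ^ 4) := by
  have hT_abs : |T| ≤ 1 := by
    rw [hT, abs_of_nonneg (Real.sqrt_nonneg _), Real.sqrt_le_one]
    exact div_le_one_of_le₀ (by linarith [sq_nonneg R]) (by positivity)
  have hD : lemniscateSubst T = √((1 - R ^ 4) / (1 + R ^ 4)) := by
    rw [hT, lemniscateSubst_sqrt]
    congr 1
    field_simp
    ring
  rw [← hD]
  exact integral_one_div_sqrt_one_sub_pow_four_to_lemniscateSubst hT_abs

theorem lemniscate_arc_to_D_eq_sqrt_two_mul_squircle_sector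
    (R : ℝ) (hR : R ∈ Set.Icc (0:ℝ) 1)
    (T : ℝ) (hT : T = Real.sqrt ((1 - R ^ 2) / (1 + R ^ 2))) :
    ∫ r in (0:ℝ)..Real.sqrt ((1 - R ^ 4) / (1 + R ^ 4)), 1 / Real.sqrt (1 - r ^ 4) =
      Real.sqrt 2 * ∫ v in (0:ℝ)..T, 1 / Real.sqrt (1 + v ^ 4) :=
  lemniscate_arc_to_D_eq_sqrt_two_mul_squircle_sector_general R T hT
end
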